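/- arXiv:2407.10260 — 4 statements merged into one kernel-verified Lean document; each statement's English description precedes it below -/
import Mathlib

section
/- For any fixed real numbers ω_i and ω_j, the function f : (−1,1) → ℝ defined by f(r) = ∫_{−∞}^{ω_i} Φ((ω_j − r·x)/√(1−r²)) φ(x) dx is strictly increasing on (−1,1). -/
open MeasureTheory Real

/-- The standard normal density `φ(x) = (2π)^{-1/2} exp(−x²/2)`. -/
noncomputable def stdNormalPDF (x : ℝ) : ℝ :=
  (Real.sqrt (2 * Real.pi))⁻¹ * Real.exp (-x ^ 2 / 2)

/-- The standard normal distribution function `Φ(x) = ∫_{−∞}^x φ(u) du`. -/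
noncomputable def stdNormalCDF (x : ℝ) : ℝ :=
  ∫ u in Set.Iic x, stdNormalPDF u

/-!
Write `g r x = (ω_j − r x)/√(1 − r²)`. Because `φ' = −x φ`, the `r`-derivative of the integrand
`Φ(g r x) φ(x)` is the `x`-derivative of the bivariate normal density
`φ₂(r; x, ω_j) = φ(g r x) φ(x) / √(1 − r²)`. Differentiating under the integral sign (dominated
near each `r` using only `φ ≤ (2π)^{-1/2}` and a lower bound on `√(1 − r²)`) and integrating over
`x ≤ ω_i` gives Plackett's identity: the derivative in `r` is `φ₂(r; ω_i, ω_j) > 0`.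
-/

open Filter Set Topology ProbabilityTheory

lemma stdNormalPDF_eq_gaussianPDFReal : stdNormalPDF = gaussianPDFReal 0 1 := by
  ext x
  simp [stdNormalPDF, gaussianPDFReal]

lemma stdNormalPDF_pos (x : ℝ) : 0 < stdNormalPDF x := by
  rw [stdNormalPDF_eq_gaussianPDFReal]
  exact gaussianPDFReal_pos _ _ _ one_ne_zero

lemma stdNormalPDF_le (x : ℝ) : stdNormalPDF x ≤ (√(2 * π))⁻¹ :=
  mul_le_of_le_one_right (by positivity) (exp_le_one_iff.2 (by nlinarith [sq_nonneg x]))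

@[fun_prop]
lemma continuous_stdNormalPDF : Continuous stdNormalPDF := by
  unfold stdNormalPDF
  fun_prop

lemma hasDerivAt_stdNormalPDF (x : ℝ) : HasDerivAt stdNormalPDF (-x * stdNormalPDF x) x := by
  have hexponent : HasDerivAt (fun y : ℝ ↦ -y ^ 2 / 2) (-x) x :=
    ((hasDerivAt_pow 2 x).fun_neg.div_const 2).congr_deriv (by norm_num; ring)
  exact (hexponent.exp.const_mul (√(2 * π))⁻¹).congr_deriv (by unfold stdNormalPDF; ring)

lemma integrable_stdNormalPDF : Integrable stdNormalPDF :=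
  stdNormalPDF_eq_gaussianPDFReal ▸ integrable_gaussianPDFReal 0 1

lemma integral_stdNormalPDF : ∫ x, stdNormalPDF x = 1 := by
  rw [stdNormalPDF_eq_gaussianPDFReal]
  exact integral_gaussianPDFReal_eq_one 0 one_ne_zero

lemma integrable_mul_stdNormalPDF : Integrable fun x ↦ x * stdNormalPDF x := by
  refine ((integrable_mul_exp_neg_mul_sq (b := 1 / 2) (by norm_num)).const_mul
    (√(2 * π))⁻¹).congr (Eventually.of_forall fun x ↦ ?_)
  simp only [stdNormalPDF]
  ring_nf

lemma tendsto_stdNormalPDF_atBot : Tendsto stdNormalPDF atBot (𝓝 0) :=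
  tendsto_zero_of_hasDerivAt_of_integrableOn_Iic (a := 0) (fun x _ ↦ hasDerivAt_stdNormalPDF x)
    (by simpa only [neg_mul] using integrable_mul_stdNormalPDF.fun_neg.integrableOn)
    integrable_stdNormalPDF.integrableOn

lemma hasDerivAt_stdNormalCDF (x : ℝ) : HasDerivAt stdNormalCDF (stdNormalPDF x) x := by
  have hint : ∀ b, IntegrableOn stdNormalPDF (Iic b) := fun _ ↦ integrable_stdNormalPDF.integrableOn
  have hsplit : stdNormalCDF = fun y ↦ stdNormalCDF 0 + ∫ u in (0 : ℝ)..y, stdNormalPDF u := by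
    ext y
    rw [← intervalIntegral.integral_Iic_sub_Iic (hint 0) (hint y)]
    simp [stdNormalCDF]
  rw [hsplit]
  exact (intervalIntegral.integral_hasDerivAt_right integrable_stdNormalPDF.intervalIntegrable
    (continuous_stdNormalPDF.stronglyMeasurableAtFilter _ _)
    continuous_stdNormalPDF.continuousAt).const_add _

@[fun_prop]
lemma continuous_stdNormalCDF : Continuous stdNormalCDF :=
  continuous_iff_continuousAt.2 fun x ↦ (hasDerivAt_stdNormalCDF x).continuousAt

lemma stdNormalCDF_nonneg (x : ℝ) : 0 ≤ stdNormalCDF x :=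
  setIntegral_nonneg measurableSet_Iic fun y _ ↦ (stdNormalPDF_pos y).le

lemma stdNormalCDF_le_one (x : ℝ) : stdNormalCDF x ≤ 1 :=
  integral_stdNormalPDF ▸ setIntegral_le_integral integrable_stdNormalPDF
    (Eventually.of_forall fun y ↦ (stdNormalPDF_pos y).le)

/-- The standard bivariate normal density with correlation `r`, factored as the density `φ(x)` of
the first coordinate times the density of `N(r x, 1 - r²)` at `y`. -/
noncomputable def bivNormalPDF (r x y : ℝ) : ℝ :=
  stdNormalPDF ((y - r * x) / √(1 - r ^ 2)) * stdNormalPDF x / √(1 - r ^ 2)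

noncomputable def bivNormalPDFDerivFst (r x y : ℝ) : ℝ :=
  stdNormalPDF ((y - r * x) / √(1 - r ^ 2)) * ((r * y - x) / √(1 - r ^ 2) ^ 3) * stdNormalPDF x

section Plackett

variable {r : ℝ} (x y : ℝ)

lemma hasDerivAt_sub_mul_div_sqrt_one_sub_sq (hr : r ^ 2 < 1) :
    HasDerivAt (fun r ↦ (y - r * x) / √(1 - r ^ 2)) ((r * y - x) / √(1 - r ^ 2) ^ 3) r := by
  have hs : 0 < √(1 - r ^ 2) := sqrt_pos.2 (by linarith)
  have hs2 : √(1 - r ^ 2) ^ 2 = 1 - r ^ 2 := sq_sqrt (by linarith)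
  have hnum : HasDerivAt (fun r : ℝ ↦ y - r * x) (-x) r := by
    simpa using ((hasDerivAt_id r).mul_const x).const_sub y
  have hden : HasDerivAt (fun r : ℝ ↦ √(1 - r ^ 2)) (1 / (2 * √(1 - r ^ 2)) * -(2 * r)) r :=
    (hasDerivAt_sqrt (by linarith)).comp r (by simpa using (hasDerivAt_pow 2 r).const_sub 1)
  refine (hnum.div hden hs.ne').congr_deriv ?_
  field_simp
  linear_combination -x * hs2

lemma hasDerivAt_stdNormalCDF_comp_mul_stdNormalPDF (hr : r ^ 2 < 1) :
    HasDerivAt (fun r ↦ stdNormalCDF ((y - r * x) / √(1 - r ^ 2)) * stdNormalPDF x)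
      (bivNormalPDFDerivFst r x y) r :=
  ((hasDerivAt_stdNormalCDF _).comp r (hasDerivAt_sub_mul_div_sqrt_one_sub_sq x y hr)).mul_const _

lemma hasDerivAt_bivNormalPDF_fst (hr : r ^ 2 < 1) :
    HasDerivAt (fun x ↦ bivNormalPDF r x y) (bivNormalPDFDerivFst r x y) x := by
  have hs : 0 < √(1 - r ^ 2) := sqrt_pos.2 (by linarith)
  have hs2 : √(1 - r ^ 2) ^ 2 = 1 - r ^ 2 := sq_sqrt (by linarith)
  have harg : HasDerivAt (fun x ↦ (y - r * x) / √(1 - r ^ 2)) (-r / √(1 - r ^ 2)) x := by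
    simpa using (((hasDerivAt_id x).const_mul r).const_sub y).div_const √(1 - r ^ 2)
  refine ((((hasDerivAt_stdNormalPDF _).comp x harg).mul
    (hasDerivAt_stdNormalPDF x)).div_const _).congr_deriv ?_
  simp only [bivNormalPDFDerivFst, Function.comp_apply]
  field_simp
  linear_combination -stdNormalPDF ((y - r * x) / √(1 - r ^ 2)) * stdNormalPDF x * x * hs2

lemma abs_bivNormalPDFDerivFst_le {δ : ℝ} (hδ : 0 < δ) (hr : δ ≤ √(1 - r ^ 2)) :
    |bivNormalPDFDerivFst r x y| ≤ (√(2 * π))⁻¹ / δ ^ 3 * ((|y| + |x|) * stdNormalPDF x) := by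
  have hr1 : |r| ≤ 1 :=
    (sq_le_one_iff_abs_le_one r).1 (by linarith [sqrt_pos.1 (hδ.trans_le hr)])
  have hnum : |r * y - x| ≤ |y| + |x| := by
    refine (abs_sub _ _).trans (add_le_add_left ?_ _)
    rw [abs_mul]
    exact mul_le_of_le_one_left (abs_nonneg y) hr1
  rw [bivNormalPDFDerivFst, abs_mul, abs_mul, abs_div, abs_of_pos (stdNormalPDF_pos _),
    abs_of_pos (stdNormalPDF_pos x), abs_of_pos (pow_pos (hδ.trans_le hr) 3)]
  calc stdNormalPDF ((y - r * x) / √(1 - r ^ 2)) * (|r * y - x| / √(1 - r ^ 2) ^ 3)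
        * stdNormalPDF x
      ≤ (√(2 * π))⁻¹ * ((|y| + |x|) / δ ^ 3) * stdNormalPDF x := by
        gcongr
        · exact (stdNormalPDF_pos x).le
        · exact stdNormalPDF_le _
    _ = _ := by ring

lemma integrable_abs_add_abs_mul_stdNormalPDF :
    Integrable fun x ↦ (|y| + |x|) * stdNormalPDF x := by
  refine ((integrable_stdNormalPDF.const_mul |y|).add integrable_mul_stdNormalPDF.abs).congr
    (Eventually.of_forall fun x ↦ ?_)
  simp only [Pi.add_apply, abs_mul, abs_of_pos (stdNormalPDF_pos x)]
  ring

lemma continuous_bivNormalPDFDerivFst : Continuous fun x ↦ bivNormalPDFDerivFst r x y := by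
  unfold bivNormalPDFDerivFst
  fun_prop

lemma integrable_bivNormalPDFDerivFst (hr : r ^ 2 < 1) :
    Integrable fun x ↦ bivNormalPDFDerivFst r x y :=
  ((integrable_abs_add_abs_mul_stdNormalPDF y).const_mul _).mono'
    (continuous_bivNormalPDFDerivFst y).aestronglyMeasurable
    (Eventually.of_forall fun x ↦ abs_bivNormalPDFDerivFst_le x y (sqrt_pos.2 (by linarith)) le_rfl)

lemma tendsto_bivNormalPDF_atBot : Tendsto (fun x ↦ bivNormalPDF r x y) atBot (𝓝 0) := by
  have hlim : Tendsto (fun x ↦ (√(2 * π))⁻¹ * stdNormalPDF x / √(1 - r ^ 2)) atBot (𝓝 0) := by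
    simpa using (tendsto_stdNormalPDF_atBot.const_mul _).div_const _
  refine tendsto_of_tendsto_of_tendsto_of_le_of_le tendsto_const_nhds hlim (fun x ↦ ?_) fun x ↦ ?_
  · exact div_nonneg (mul_nonneg (stdNormalPDF_pos _).le (stdNormalPDF_pos x).le) (sqrt_nonneg _)
  · unfold bivNormalPDF
    gcongr
    · exact (stdNormalPDF_pos x).le
    · exact stdNormalPDF_le _

lemma bivNormalPDF_pos (hr : r ^ 2 < 1) : 0 < bivNormalPDF r x y :=
  div_pos (mul_pos (stdNormalPDF_pos _) (stdNormalPDF_pos x)) (sqrt_pos.2 (by linarith))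

lemma integral_Iic_bivNormalPDFDerivFst (hr : r ^ 2 < 1) (a : ℝ) :
    ∫ x in Iic a, bivNormalPDFDerivFst r x y = bivNormalPDF r a y := by
  simpa using integral_Iic_of_hasDerivAt_of_tendsto'
    (fun x _ ↦ hasDerivAt_bivNormalPDF_fst x y hr)
    (integrable_bivNormalPDFDerivFst y hr).integrableOn (tendsto_bivNormalPDF_atBot y)

end Plackett

lemma integrable_stdNormalCDF_comp_mul_stdNormalPDF {f : ℝ → ℝ} (hf : Measurable f) :
    Integrable fun x ↦ stdNormalCDF (f x) * stdNormalPDF x := by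
  refine integrable_stdNormalPDF.mono' (by fun_prop) (Eventually.of_forall fun x ↦ ?_)
  rw [norm_mul, Real.norm_of_nonneg (stdNormalCDF_nonneg _),
    Real.norm_of_nonneg (stdNormalPDF_pos x).le]
  exact mul_le_of_le_one_left (stdNormalPDF_pos x).le (stdNormalCDF_le_one _)

lemma hasDerivAt_integral_Iic_stdNormalCDF_mul_stdNormalPDF (a y : ℝ) {r₀ : ℝ}
    (hr₀ : r₀ ^ 2 < 1) :
    HasDerivAt (fun r ↦ ∫ x in Iic a, stdNormalCDF ((y - r * x) / √(1 - r ^ 2)) * stdNormalPDF x)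
      (bivNormalPDF r₀ a y) r₀ := by
  set δ := √(1 - r₀ ^ 2) / 2
  have hδ : 0 < δ := half_pos (sqrt_pos.2 (by linarith))
  have hcont : ContinuousAt (fun r : ℝ ↦ √(1 - r ^ 2)) r₀ := by fun_prop
  have hnhds : {r : ℝ | δ ≤ √(1 - r ^ 2)} ∈ 𝓝 r₀ :=
    (continuousAt_const.eventually_lt hcont (half_lt_self (sqrt_pos.2 (by linarith)))).mono
      fun _ h ↦ h.le
  have hsq : ∀ r ∈ {r : ℝ | δ ≤ √(1 - r ^ 2)}, r ^ 2 < 1 := fun r hr ↦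
    sub_pos.1 (sqrt_pos.1 (hδ.trans_le hr))
  have hderiv := hasDerivAt_integral_of_dominated_loc_of_deriv_le (μ := volume.restrict (Iic a))
    (F' := fun r x ↦ bivNormalPDFDerivFst r x y) hnhds
    (Eventually.of_forall fun r ↦ Continuous.aestronglyMeasurable (by fun_prop))
    (integrable_stdNormalCDF_comp_mul_stdNormalPDF (by fun_prop)).restrict
    (continuous_bivNormalPDFDerivFst y).aestronglyMeasurable
    (ae_of_all _ fun x r hr ↦ abs_bivNormalPDFDerivFst_le x y hδ hr)
    ((integrable_abs_add_abs_mul_stdNormalPDF y).const_mul _).restrict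
    (ae_of_all _ fun x r hr ↦ hasDerivAt_stdNormalCDF_comp_mul_stdNormalPDF x y (hsq r hr))
  rw [← integral_Iic_bivNormalPDFDerivFst y hr₀ a]
  exact hderiv.2

/-- For fixed `ω_i, ω_j ∈ ℝ`, the function
`r ↦ ∫_{−∞}^{ω_i} Φ((ω_j − r·x)/√(1−r²)) φ(x) dx` is strictly increasing on `(−1,1)`. -/
theorem stmt3 (ωi ωj : ℝ) :
    StrictMonoOn
      (fun r : ℝ =>
        ∫ x in Set.Iic ωi,
          stdNormalCDF ((ωj - r * x) / Real.sqrt (1 - r ^ 2)) * stdNormalPDF x)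
      (Set.Ioo (-1 : ℝ) 1) := by
  have hsq : ∀ r ∈ Ioo (-1 : ℝ) 1, r ^ 2 < 1 := fun r hr ↦
    (sq_lt_one_iff_abs_lt_one r).2 (abs_lt.2 hr)
  have hderiv := fun r hr ↦ hasDerivAt_integral_Iic_stdNormalCDF_mul_stdNormalPDF ωi ωj (hsq r hr)
  refine strictMonoOn_of_hasDerivWithinAt_pos (f' := fun r ↦ bivNormalPDF r ωi ωj) (convex_Ioo _ _)
    (fun r hr ↦ (hderiv r hr).continuousAt.continuousWithinAt) (fun r hr ↦ ?_) fun r hr ↦ ?_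
  · rw [interior_Ioo] at hr
    exact (hderiv r hr).hasDerivWithinAt
  · rw [interior_Ioo] at hr
    exact bivNormalPDF_pos ωi ωj (hsq r hr)
end

section
/- Let (Ω, 𝓐, μ) be a probability space and T : Ω → Ω a measure-preserving transformation, and let 𝓘 = { B ∈ 𝓐 : T^{−1}(B) = B } be the σ-algebra of T-invariant sets. If A ∈ 𝓐 satisfies μ[1_A | 𝓘] > 0 almost surely (conditional expectation of the indicator of A given 𝓘), then μ( limsup_n T^{−n}(A) ) = 1, i.e. almost every ω ∈ Ω belongs to T^{−n}(A) for infinitely many n. -/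
/-!
The set `L` of points visiting `A` infinitely often is `T`-invariant, and by Poincaré recurrence
almost every point of `A` lies in `L`. Integrating `μ[1_A | invariantsSigma T]` over the invariant
set `Lᶜ` therefore gives `μ (A \ L) = 0`. A nonnegative function with zero integral vanishes a.e.,
so the a.s. positivity of the conditional expectation forces `μ Lᶜ = 0`.
-/

open MeasureTheory Filter

/-- The σ-algebra of `T`-invariant measurable sets. -/
def invariantsSigma {Ω : Type*} [m : MeasurableSpace Ω] (T : Ω → Ω) : MeasurableSpace Ω where
  MeasurableSet' s := MeasurableSet s ∧ T ⁻¹' s = s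
  measurableSet_empty := ⟨MeasurableSet.empty, by simp⟩
  measurableSet_compl s hs := ⟨hs.1.compl, by rw [Set.preimage_compl, hs.2]⟩
  measurableSet_iUnion f hf := ⟨MeasurableSet.iUnion fun i => (hf i).1, by
    rw [Set.preimage_iUnion]; exact Set.iUnion_congr fun i => (hf i).2⟩

section

variable {Ω : Type*}

theorem invariantsSigma_le [MeasurableSpace Ω] (T : Ω → Ω) :
    invariantsSigma T ≤ ‹MeasurableSpace Ω› :=
  fun _ hs => hs.1

theorem preimage_limsup_iterate_preimage (T : Ω → Ω) (A : Set Ω) :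
    T ⁻¹' limsup (fun n : ℕ => T^[n] ⁻¹' A) atTop =
      limsup (fun n : ℕ => T^[n] ⁻¹' A) atTop :=
  calc T ⁻¹' limsup (fun n : ℕ => T^[n] ⁻¹' A) atTop
      = limsup (fun n : ℕ => T^[n + 1] ⁻¹' A) atTop := by
        simp only [limsup_eq_iInf_iSup_of_nat, Set.iInf_eq_iInter, Set.iSup_eq_iUnion,
          Set.preimage_iInter, Set.preimage_iUnion, ← Set.preimage_comp, Function.iterate_succ]
    _ = limsup (fun n : ℕ => T^[n] ⁻¹' A) atTop := limsup_nat_add (fun n => T^[n] ⁻¹' A) 1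

theorem measurableSet_invariantsSigma_limsup_iterate_preimage [MeasurableSpace Ω]
    {T : Ω → Ω} (hT : Measurable T) {A : Set Ω} (hA : MeasurableSet A) :
    MeasurableSet[invariantsSigma T] (limsup (fun n : ℕ => T^[n] ⁻¹' A) atTop) :=
  ⟨.measurableSet_limsup fun n => hA.preimage (hT.iterate n),
    preimage_limsup_iterate_preimage T A⟩

theorem MeasureTheory.Conservative.measure_diff_limsup_iterate_preimage [MeasurableSpace Ω]
    {μ : Measure Ω} {T : Ω → Ω} (hT : Conservative T μ) {A : Set Ω}
    (hA : NullMeasurableSet A μ) :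
    μ (A \ limsup (fun n : ℕ => T^[n] ⁻¹' A) atTop) = 0 := by
  refine ae_le_set.1 ?_
  filter_upwards [hT.ae_mem_imp_frequently_image_mem hA] with ω hω hωA
  exact (mem_limsup_iff_frequently_mem.2 (hω hωA) :
    ω ∈ limsup (fun n : ℕ => T^[n] ⁻¹' A) atTop)

theorem measure_eq_zero_of_setIntegral_eq_zero_of_ae_condExp_pos {m m₀ : MeasurableSpace Ω}
    {μ : Measure Ω} (hm : m ≤ m₀) [SigmaFinite (μ.trim hm)] {f : Ω → ℝ}
    (hf : Integrable f μ) (hpos : ∀ᵐ ω ∂μ, 0 < (μ[f | m]) ω) {s : Set Ω}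
    (hs : MeasurableSet[m] s) (hfs : ∫ ω in s, f ω ∂μ = 0) : μ s = 0 := by
  have hzero : μ[f | m] =ᵐ[μ.restrict s] 0 := by
    refine (integral_eq_zero_iff_of_nonneg_ae ?_ integrable_condExp.integrableOn).1 ?_
    · exact ae_restrict_of_ae (hpos.mono fun _ h => h.le)
    · rwa [setIntegral_condExp hm hf hs]
  have hfalse : ∀ᵐ ω ∂μ.restrict s, False := by
    filter_upwards [hzero, ae_restrict_of_ae hpos] with ω h0 hp
    exact (h0 ▸ hp).false
  rwa [← Measure.restrict_eq_zero, ← ae_eq_bot, ← eventually_false_iff_eq_bot]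

end

/-- If `T` is a measure-preserving transformation of a probability space and the conditional
expectation of `1_A` given the invariant σ-algebra is a.s. positive, then almost every point
visits `A` infinitely often: `μ(limsup_n T^{−n}(A)) = 1`. -/
theorem stmt10 {Ω : Type*} [MeasurableSpace Ω] (μ : Measure Ω) [IsProbabilityMeasure μ]
    (T : Ω → Ω) (hT : MeasurePreserving T μ μ) (A : Set Ω) (hA : MeasurableSet A)
    (hpos : ∀ᵐ ω ∂μ,
      0 < (μ[Set.indicator A (fun _ => (1 : ℝ)) | invariantsSigma T]) ω) :
    μ (Filter.limsup (fun n : ℕ => T^[n] ⁻¹' A) Filter.atTop) = 1 := by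
  set L := limsup (fun n : ℕ => T^[n] ⁻¹' A) atTop
  have hL : MeasurableSet[invariantsSigma T] L :=
    measurableSet_invariantsSigma_limsup_iterate_preimage hT.measurable hA
  have hAL : μ (A \ L) = 0 :=
    hT.conservative.measure_diff_limsup_iterate_preimage hA.nullMeasurableSet
  have hLc : μ Lᶜ = 0 := by
    refine measure_eq_zero_of_setIntegral_eq_zero_of_ae_condExp_pos (invariantsSigma_le T)
      ((integrable_const 1).indicator hA) hpos hL.compl ?_
    rw [integral_indicator hA, setIntegral_const, measureReal_def, Measure.restrict_apply hA,
      ← Set.sdiff_eq, hAL, ENNReal.toReal_zero, zero_smul]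
  exact (prob_compl_eq_zero_iff (invariantsSigma_le T L hL)).1 hLc
end

section
/- Let (ζ_t)_{t∈ℤ} be a stationary and ergodic ℝ^n-valued process (its law on (ℝ^n)^ℤ is invariant and ergodic under the coordinate shift), let g : ({0,1}^k)^p × ℝ^n → ℝ^k be measurable, and suppose there exists j = (j₁,…,j_k) ∈ {0,1}^k such that, with positive probability, for every t ∈ {1,…,p}, every (y₁,…,y_p) ∈ ({0,1}^k)^p and every i ∈ {1,…,k}, one has 1_{g_i(y₁,…,y_p,ζ_t) > 0} = j_i. Then there exists a unique (up to almost-sure equality) stationary and ergodic {0,1}^k-valued process (Y_t)_{t∈ℤ} satisfying, for all t ∈ ℤ, Y_{i,t} = 1_{g_i(Y_{t−1},…,Y_{t−p},ζ_t) > 0} for i = 1,…,k, almost surely; moreover there is a measurable map H : (ℝ^n)^ℕ → {0,1}^k with Y_t = H(ζ_t, ζ_{t−1}, …) a.s. for all t, and the joint process (Y_t, ζ_t)_{t∈ℤ} is stationary and ergodic. -/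
/-!
Call `s` a reset time of the innovation path `x` if for the `p` steps after `s` the threshold
map outputs `j` whatever the lagged states are. After a reset time all solutions of the
recursion agree, since they share `p` consecutive states and the recursion has order `p`; in
particular they agree with the solution restarted at `s` from the constant state `j`. By
stationarity and ergodicity of `ζ`, reset times occur arbitrarily far in the past almost surely,
so `Y_t` can be defined as the common value at `t` of the solutions restarted at reset times
`s < t - p`. This is a measurable, causal, shift-equivariant function of the innovation path,
which gives existence, uniqueness and the representation, and makes `(Y, ζ)` a factor of `ζ`.
-/

open MeasureTheory

/-- The coordinate shift on two-sided sequences. -/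
def shiftZ {E : Type*} (x : ℤ → E) : ℤ → E := fun t => x (t + 1)

/-- The law of the path `(X_t)_{t∈ℤ}` on `E^ℤ`. -/
noncomputable def pathLaw {Ω E : Type*} [MeasurableSpace Ω] [MeasurableSpace E]
    (μ : Measure Ω) (X : ℤ → Ω → E) : Measure (ℤ → E) :=
  Measure.map (fun ω t => X t ω) μ

/-- A process is stationary and ergodic if its law on `E^ℤ` is invariant under the
coordinate shift and every shift-invariant measurable set has law-measure `0` or `1`. -/
def IsStatErg {Ω E : Type*} [MeasurableSpace Ω] [MeasurableSpace E]
    (μ : Measure Ω) (X : ℤ → Ω → E) : Prop :=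
  MeasurePreserving shiftZ (pathLaw μ X) (pathLaw μ X) ∧
    ∀ A : Set (ℤ → E), MeasurableSet A → shiftZ ⁻¹' A = A →
      pathLaw μ X A = 0 ∨ pathLaw μ X A = 1

section Shift

lemma shiftZ_iterate {E : Type*} (m : ℕ) (x : ℤ → E) : shiftZ^[m] x = fun t => x (t + m) := by
  induction m generalizing x with
  | zero => simp
  | succ m ih =>
    funext t
    simp only [Function.iterate_succ_apply, ih, shiftZ]
    push_cast
    ring_nf

def pastRecurrent {E : Type*} (A : Set (ℤ → E)) : Set (ℤ → E) :=
  {x | ∀ t, ∃ s < t, (fun u => x (u + s)) ∈ A}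

lemma shiftZ_preimage_pastRecurrent {E : Type*} (A : Set (ℤ → E)) :
    shiftZ ⁻¹' pastRecurrent A = pastRecurrent A := by
  ext x
  refine ⟨fun h t => ?_, fun h t => ?_⟩
  · obtain ⟨s, hst, hs⟩ := h (t - 1)
    exact ⟨s + 1, by omega, by simpa only [shiftZ, add_assoc] using hs⟩
  · obtain ⟨s, hst, hs⟩ := h (t + 1)
    refine ⟨s - 1, by omega, ?_⟩
    simpa only [shiftZ, add_assoc, sub_add_cancel] using hs

variable {E : Type*} [MeasurableSpace E]

lemma measurable_shiftZ : Measurable (shiftZ : (ℤ → E) → ℤ → E) :=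
  measurable_pi_lambda _ fun t => measurable_pi_apply (t + 1)

lemma measurable_translate (c : ℤ) : Measurable fun (x : ℤ → E) t => x (t + c) :=
  measurable_pi_lambda _ fun t => measurable_pi_apply (t + c)

lemma MeasureTheory.MeasurePreserving.translate {ν : Measure (ℤ → E)}
    (h : MeasurePreserving shiftZ ν ν) (c : ℤ) :
    MeasurePreserving (fun (x : ℤ → E) t => x (t + c)) ν ν := by
  have hnat : ∀ m : ℕ, MeasurePreserving (fun (x : ℤ → E) t => x (t + m)) ν ν := fun m => by
    rw [← funext (shiftZ_iterate m)]
    exact h.iterate m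
  obtain ⟨m, rfl | rfl⟩ := Int.eq_nat_or_neg c
  · exact hnat m
  · refine ⟨measurable_translate _, ?_⟩
    conv_lhs => rw [← (hnat m).map_eq]
    rw [Measure.map_map (measurable_translate _) (measurable_translate _)]
    convert Measure.map_id
    funext x t
    simp

variable {Ω F : Type*} [MeasurableSpace Ω] [MeasurableSpace F] {μ : Measure Ω} {X : ℤ → Ω → E}

lemma IsStatErg.comp_factor (hX : IsStatErg μ X) (hXm : ∀ t, Measurable (X t))
    {Φ : (ℤ → E) → ℤ → F} (hΦ : Measurable Φ) (hcomm : ∀ x, Φ (shiftZ x) = shiftZ (Φ x)) :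
    IsStatErg μ (fun t ω => Φ (fun s => X s ω) t) := by
  have hlaw : pathLaw μ (fun t ω => Φ (fun s => X s ω) t) = (pathLaw μ X).map Φ :=
    (Measure.map_map hΦ (measurable_pi_lambda _ hXm)).symm
  have hcomm' : shiftZ ∘ Φ = Φ ∘ shiftZ := funext fun x => (hcomm x).symm
  rw [IsStatErg, hlaw]
  refine ⟨⟨measurable_shiftZ, ?_⟩, fun A hA hinv => ?_⟩
  · rw [Measure.map_map measurable_shiftZ hΦ, hcomm', ← Measure.map_map hΦ measurable_shiftZ,
      hX.1.map_eq]
  · rw [Measure.map_apply hΦ hA]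
    refine hX.2 _ (hΦ hA) ?_
    rw [← Set.preimage_comp, ← hcomm', Set.preimage_comp, hinv]

lemma measurableSet_pastRecurrent {A : Set (ℤ → E)} (hA : MeasurableSet A) :
    MeasurableSet (pastRecurrent A) :=
  measurableSet_setOfPred.2 <| Measurable.forall fun _ => Measurable.exists fun s =>
    measurable_const.and ((measurable_mem.2 hA).comp (measurable_translate s))

lemma MeasureTheory.MeasurePreserving.measure_le_pastRecurrent {ν : Measure (ℤ → E)}
    [IsFiniteMeasure ν] (h : MeasurePreserving shiftZ ν ν) {A : Set (ℤ → E)}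
    (hA : MeasurableSet A) : ν A ≤ ν (pastRecurrent A) := by
  have hiInter : pastRecurrent A = ⋂ N : ℕ, {x | ∃ s < -(N : ℤ), (fun u => x (u + s)) ∈ A} := by
    ext x
    simp only [pastRecurrent, Set.mem_ofPred_eq, Set.mem_iInter]
    refine ⟨fun hx N => hx _, fun hx t => ?_⟩
    obtain ⟨s, hs, hsA⟩ := hx (-t).toNat
    exact ⟨s, by omega, hsA⟩
  rw [hiInter, Antitone.measure_iInter]
  · refine le_iInf fun N => ?_
    rw [← (h.translate (-N - 1)).measure_preimage hA.nullMeasurableSet]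
    exact measure_mono fun x hx => ⟨-N - 1, by omega, hx⟩
  · intro N M hNM x ⟨s, hs, hsA⟩
    exact ⟨s, by omega, hsA⟩
  · exact fun N => (measurableSet_setOfPred.2 <| Measurable.exists fun s => measurable_const.and
      ((measurable_mem.2 hA).comp (measurable_translate s))).nullMeasurableSet
  · exact ⟨0, measure_ne_top _ _⟩

lemma IsStatErg.ae_mem_pastRecurrent [IsProbabilityMeasure μ] (hX : IsStatErg μ X)
    (hXm : ∀ t, Measurable (X t)) {A : Set (ℤ → E)} (hA : MeasurableSet A)
    (hpos : 0 < μ {ω | (fun t => X t ω) ∈ A}) :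
    ∀ᵐ ω ∂μ, (fun t => X t ω) ∈ pastRecurrent A := by
  have hpath : Measurable fun ω t => X t ω := measurable_pi_lambda _ hXm
  have : IsProbabilityMeasure (pathLaw μ X) := Measure.isProbabilityMeasure_map hpath.aemeasurable
  have hRm := measurableSet_pastRecurrent hA
  have hApos : 0 < pathLaw μ X A := by rwa [pathLaw, Measure.map_apply hpath hA]
  have hR1 : pathLaw μ X (pastRecurrent A) = 1 :=
    (hX.2 _ hRm (shiftZ_preimage_pastRecurrent A)).resolve_left
      (hApos.trans_le (hX.1.measure_le_pastRecurrent hA)).ne'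
  have hae : ∀ᵐ x ∂pathLaw μ X, x ∈ pastRecurrent A :=
    (ae_iff_measure_eq hRm.nullMeasurableSet).2 (hR1.trans measure_univ.symm)
  exact ae_of_ae_map hpath.aemeasurable hae

end Shift

lemma measurable_decide {α : Type*} [MeasurableSpace α] {P : α → Prop} [DecidablePred P]
    (hP : Measurable P) : Measurable fun a => decide (P a) :=
  measurable_to_bool <| by
    rw [show (fun a => decide (P a)) ⁻¹' {true} = {a | P a} from Set.ext fun a => by simp]
    exact hP.setOf

namespace BinaryAR

variable {n k p : ℕ} (g : (Fin p → Fin k → Bool) → (Fin n → ℝ) → Fin k → ℝ) (j : Fin k → Bool)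

noncomputable def thresholdStep (y : Fin p → Fin k → Bool) (z : Fin n → ℝ) : Fin k → Bool :=
  fun i => decide (0 < g y z i)

def SolvesAfter (x : ℤ → Fin n → ℝ) (s : ℤ) (Z : ℤ → Fin k → Bool) : Prop :=
  ∀ t, s < t → Z t = thresholdStep g (fun l : Fin p => Z (t - 1 - (l : ℕ))) (x t)

def IsResetTime (x : ℤ → Fin n → ℝ) (s : ℤ) : Prop :=
  ∀ u, s < u → u ≤ s + p → ∀ y, thresholdStep g y (x u) = j

def HasResetTimes (x : ℤ → Fin n → ℝ) : Prop :=
  ∀ t, ∃ s < t, IsResetTime g j x s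

noncomputable def restart (x : ℤ → Fin n → ℝ) (s t : ℤ) : Fin k → Bool :=
  if t ≤ s then j else thresholdStep g (fun l : Fin p => restart x s (t - 1 - (l : ℕ))) (x t)
termination_by (t - s).toNat
decreasing_by omega

-- `s + p < t` makes `solution x t` depend on `x` only up to time `t`.
open Classical in
noncomputable def solution (x : ℤ → Fin n → ℝ) (t : ℤ) : Fin k → Bool :=
  fun i => decide (∃ s, s + p < t ∧ IsResetTime g j x s ∧ restart g j x s t i = true)

variable {g j} {x : ℤ → Fin n → ℝ}

lemma SolvesAfter.mono {s s' : ℤ} {Z : ℤ → Fin k → Bool} (hZ : SolvesAfter g x s Z)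
    (hss' : s ≤ s') : SolvesAfter g x s' Z :=
  fun t ht => hZ t (hss'.trans_lt ht)

lemma IsResetTime.eq_of_solvesAfter {s : ℤ} {Z Z' : ℤ → Fin k → Bool}
    (hW : IsResetTime g j x s) (hZ : SolvesAfter g x s Z) (hZ' : SolvesAfter g x s Z')
    (t : ℤ) (ht : s < t) : Z t = Z' t := by
  rw [hZ t ht, hZ' t ht]
  by_cases htp : t ≤ s + p
  · rw [hW t ht htp, hW t ht htp]
  · congr 1
    funext l
    exact hW.eq_of_solvesAfter hZ hZ' _ (by omega)
termination_by (t - s).toNat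
decreasing_by omega

lemma restart_of_le {s t : ℤ} (h : t ≤ s) : restart g j x s t = j := by
  rw [restart, if_pos h]

lemma restart_of_lt {s t : ℤ} (h : s < t) :
    restart g j x s t =
      thresholdStep g (fun l : Fin p => restart g j x s (t - 1 - (l : ℕ))) (x t) := by
  rw [restart, if_neg (not_le.2 h)]

lemma restart_solvesAfter (s : ℤ) : SolvesAfter g x s (restart g j x s) :=
  fun _ => restart_of_lt

lemma restart_eq_restart {s s' t : ℤ} (hW : IsResetTime g j x s) (hW' : IsResetTime g j x s')
    (hs : s < t) (hs' : s' < t) : restart g j x s t = restart g j x s' t := by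
  wlog h : s' ≤ s generalizing s s'
  · exact (this hW' hW hs' hs (le_of_not_ge h)).symm
  exact hW.eq_of_solvesAfter (restart_solvesAfter s) ((restart_solvesAfter s').mono h) t hs

lemma solution_eq_restart {s t : ℤ} (hW : IsResetTime g j x s) (hst : s + p < t) :
    solution g j x t = restart g j x s t := by
  classical
  funext i
  rw [solution, Bool.eq_iff_iff, decide_eq_true_iff]
  constructor
  · rintro ⟨s', hs', hW', hr⟩
    rwa [restart_eq_restart hW hW' (by omega) (by omega)]
  · exact fun hr => ⟨s, hst, hW, hr⟩

lemma HasResetTimes.solution_eq_thresholdStep (hx : HasResetTimes g j x) (t : ℤ) :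
    solution g j x t =
      thresholdStep g (fun l : Fin p => solution g j x (t - 1 - (l : ℕ))) (x t) := by
  obtain ⟨s, hs, hW⟩ := hx (t - p - p)
  rw [solution_eq_restart hW (by omega), restart_of_lt (by omega)]
  congr 1
  funext l
  exact (solution_eq_restart hW (by omega)).symm

lemma HasResetTimes.eq_solution (hx : HasResetTimes g j x) {Z : ℤ → Fin k → Bool}
    (hZ : ∀ t, Z t = thresholdStep g (fun l : Fin p => Z (t - 1 - (l : ℕ))) (x t)) :
    Z = solution g j x := by
  funext t
  obtain ⟨s, hs, hW⟩ := hx (t - p)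
  rw [solution_eq_restart hW (by omega)]
  exact hW.eq_of_solvesAfter (fun τ _ => hZ τ) (restart_solvesAfter s) t (by omega)

lemma isResetTime_congr {x' : ℤ → Fin n → ℝ} {s c : ℤ} (h : ∀ u ≤ s + p, x' (u + c) = x u) :
    IsResetTime g j x' (s + c) ↔ IsResetTime g j x s := by
  refine ⟨fun hW u hu hup y => ?_, fun hW u hu hup y => ?_⟩
  · rw [← h u hup]
    exact hW (u + c) (by omega) (by omega) y
  · rw [← sub_add_cancel u c, h _ (by omega)]
    exact hW (u - c) (by omega) (by omega) y

lemma restart_congr {x' : ℤ → Fin n → ℝ} {s c t : ℤ} (h : ∀ u ≤ t, x' (u + c) = x u) :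
    restart g j x' (s + c) (t + c) = restart g j x s t := by
  by_cases hts : t ≤ s
  · rw [restart_of_le hts, restart_of_le (by omega)]
  · rw [restart_of_lt (by omega), restart_of_lt (not_le.1 hts), h t le_rfl]
    congr 1
    funext l
    rw [show t + c - 1 - (l : ℕ) = t - 1 - (l : ℕ) + c by ring]
    exact restart_congr fun u hu => h u (by omega)
termination_by (t - s).toNat
decreasing_by omega

lemma solution_congr {x' : ℤ → Fin n → ℝ} {c t : ℤ} (h : ∀ u ≤ t, x' (u + c) = x u) :
    solution g j x' (t + c) = solution g j x t := by
  classical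
  funext i
  simp only [solution, decide_eq_decide]
  constructor
  · rintro ⟨s', hs', hW, hr⟩
    refine ⟨s' - c, by omega, ?_, ?_⟩
    · rw [← isResetTime_congr (c := c) fun u hu => h u (by omega), sub_add_cancel]
      exact hW
    · rwa [← restart_congr h, sub_add_cancel]
  · rintro ⟨s, hs, hW, hr⟩
    exact ⟨s + c, by omega, (isResetTime_congr fun u hu => h u (by omega)).2 hW,
      by rwa [restart_congr h]⟩

section Measurability

variable (hg : Measurable fun q : (Fin p → Fin k → Bool) × (Fin n → ℝ) => g q.1 q.2)
include hg

lemma measurable_thresholdStep :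
    Measurable fun q : (Fin p → Fin k → Bool) × (Fin n → ℝ) => thresholdStep g q.1 q.2 :=
  measurable_pi_lambda _ fun i => measurable_decide <| measurableSet_setOfPred.1 <|
    measurableSet_lt measurable_const ((measurable_pi_apply i).comp hg)

lemma measurableSet_isResetTime (s : ℤ) :
    MeasurableSet {x : ℤ → Fin n → ℝ | IsResetTime g j x s} :=
  measurableSet_setOfPred.2 <| Measurable.forall fun u => measurable_const.imp <|
    measurable_const.imp <| Measurable.forall fun _ =>
      ((measurable_thresholdStep hg).comp
        (measurable_const.prodMk (measurable_pi_apply u))).eq_const j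

lemma measurable_restart (s t : ℤ) : Measurable fun x : ℤ → Fin n → ℝ => restart g j x s t := by
  by_cases hts : t ≤ s
  · simp only [restart_of_le hts]
    exact measurable_const
  · simp only [restart_of_lt (not_le.1 hts)]
    exact (measurable_thresholdStep hg).comp
      ((measurable_pi_lambda _ fun l => measurable_restart s _).prodMk (measurable_pi_apply t))
termination_by (t - s).toNat
decreasing_by omega

lemma measurable_solution (t : ℤ) : Measurable fun x : ℤ → Fin n → ℝ => solution g j x t := by
  classical
  exact measurable_pi_lambda _ fun i => measurable_decide <| Measurable.exists fun s =>
    measurable_const.and <| (measurableSet_isResetTime hg s).mem.and <|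
      ((measurable_pi_apply i).comp (measurable_restart hg s t)).eq_const true

lemma ae_hasResetTimes {Ω : Type*} [MeasurableSpace Ω] {μ : Measure Ω} [IsProbabilityMeasure μ]
    {ζ : ℤ → Ω → Fin n → ℝ} (hζ : IsStatErg μ ζ) (hζm : ∀ t, Measurable (ζ t))
    (hpos : 0 < μ {ω | IsResetTime g j (fun t => ζ t ω) 0}) :
    ∀ᵐ ω ∂μ, HasResetTimes g j fun t => ζ t ω := by
  filter_upwards [hζ.ae_mem_pastRecurrent hζm (measurableSet_isResetTime hg 0) hpos] with ω hω t
  obtain ⟨s, hst, hs⟩ := hω t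
  have := (isResetTime_congr (x' := fun u => ζ u ω) (c := s) fun _ _ => rfl).2 hs
  exact ⟨s, hst, by rwa [zero_add] at this⟩

end Measurability

end BinaryAR

open BinaryAR

/-- Existence, uniqueness, Bernoulli-shift representation and joint ergodicity of the
stationary solution of `Y_{i,t} = 1_{g_i(Y_{t−1},…,Y_{t−p},ζ_t) > 0}`, under a
coalescence-type condition on `g`. -/
theorem stmt12 {Ω : Type*} [MeasurableSpace Ω] (μ : Measure Ω) [IsProbabilityMeasure μ]
    (n k p : ℕ) (ζ : ℤ → Ω → (Fin n → ℝ)) (hζmeas : ∀ t, Measurable (ζ t))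
    (hζ : IsStatErg μ ζ)
    (g : (Fin p → Fin k → Bool) → (Fin n → ℝ) → Fin k → ℝ)
    (hg : Measurable fun q : (Fin p → Fin k → Bool) × (Fin n → ℝ) => g q.1 q.2)
    (j : Fin k → Bool)
    (hA2 : 0 < μ {ω | ∀ t : ℤ, 1 ≤ t → t ≤ (p : ℤ) →
        ∀ y : Fin p → Fin k → Bool, ∀ i : Fin k, decide (0 < g y (ζ t ω) i) = j i}) :
    ∃ Y : ℤ → Ω → (Fin k → Bool),
      (∀ t, Measurable (Y t)) ∧
      IsStatErg μ Y ∧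
      (∀ t : ℤ, ∀ᵐ ω ∂μ, ∀ i : Fin k,
        Y t ω i = decide (0 < g (fun l : Fin p => Y (t - 1 - (l : ℕ)) ω) (ζ t ω) i)) ∧
      (∀ Y' : ℤ → Ω → (Fin k → Bool),
        (∀ t, Measurable (Y' t)) → IsStatErg μ Y' →
        (∀ t : ℤ, ∀ᵐ ω ∂μ, ∀ i : Fin k,
          Y' t ω i = decide (0 < g (fun l : Fin p => Y' (t - 1 - (l : ℕ)) ω) (ζ t ω) i)) →
        ∀ t : ℤ, ∀ᵐ ω ∂μ, Y t ω = Y' t ω) ∧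
      (∃ H : (ℕ → Fin n → ℝ) → (Fin k → Bool), Measurable H ∧
        ∀ t : ℤ, ∀ᵐ ω ∂μ, Y t ω = H fun s : ℕ => ζ (t - s) ω) ∧
      IsStatErg μ (fun t ω => (Y t ω, ζ t ω)) := by
  have hpath : Measurable fun ω t => ζ t ω := measurable_pi_lambda _ hζmeas
  have hreset : ∀ᵐ ω ∂μ, HasResetTimes g j fun t => ζ t ω :=
    ae_hasResetTimes hg hζ hζmeas <| hA2.trans_le <| measure_mono fun ω hω u hu hup y =>
      funext fun i => hω u (by omega) (by omega) y i
  have hshift (x : ℤ → Fin n → ℝ) (t : ℤ) : solution g j (shiftZ x) t = solution g j x (t + 1) :=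
    (solution_congr fun _ _ => rfl).symm
  refine ⟨fun t ω => solution g j (fun u => ζ u ω) t,
    fun t => (measurable_solution hg t).comp hpath,
    hζ.comp_factor hζmeas (measurable_pi_lambda _ (measurable_solution hg))
      fun x => funext (hshift x),
    fun t => hreset.mono fun ω hω => congrFun (hω.solution_eq_thresholdStep t), ?_, ?_, ?_⟩
  · intro Y' _ _ hY' t
    filter_upwards [hreset, ae_all_iff.2 hY'] with ω hω hω'
    exact (congrFun (hω.eq_solution fun τ => funext (hω' τ)) t).symm
  · refine ⟨fun w => solution g j (fun u => w (-u).toNat) 0,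
      (measurable_solution hg 0).comp (measurable_pi_lambda _ fun u => measurable_pi_apply _),
      fun t => ae_of_all _ fun ω => ?_⟩
    have := solution_congr (g := g) (j := j) (x := fun u => ζ u ω)
      (x' := fun u => ζ (t - (-u).toNat) ω) (c := -t) (t := t) fun u hu => by congr 1; omega
    simpa using this.symm
  · exact hζ.comp_factor hζmeas (Φ := fun x t => (solution g j x t, x t))
      (measurable_pi_lambda _ fun t => (measurable_solution hg t).prodMk (measurable_pi_apply t))
      fun x => funext fun t => by simp only [hshift]; rfl
end

section
/- Let (V_j)_{j∈ℤ} be i.i.d. ℝ^{d₂}-valued, (η_t)_{t∈ℤ} i.i.d. ℝ^{d₃}-valued, and for each j ∈ ℤ let ((κ_{j,t}, ε_{j,t}))_{t∈ℤ} be an i.i.d. sequence with values in ℝ^{d₄} × ℝ^{k}, these sequences being i.i.d. across j; assume (V_j)_j, (η_t)_t and the family ((κ_{j,t}, ε_{j,t})_t)_j are mutually independent. Given a measurable map Ḡ : ℝ^{d₂} × (ℝ^{d₃+d₄+k})^ℕ → ℝ, define Z_{j,t} = Ḡ( V_j, ((η_{t−s}, κ_{j,t−s}, ε_{j,t−s}))_{s≥0}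 ). Then the law P_Z of the array (Z_{j,t})_{(j,t)∈ℤ²} on ℝ^{ℤ×ℤ} is invariant under the two shifts τ₁ : (x_{j,t}) ↦ (x_{j+1,t}) and τ₂ : (x_{j,t}) ↦ (x_{j,t+1}), and every measurable set A ⊆ ℝ^{ℤ×ℤ} with τ₁^{−1}(A) = A and τ₂^{−1}(A) = A satisfies P_Z(A) ∈ {0,1}. -/
/-!
All randomness is carried by one independent family indexed by `ℤ ⊕ ℤ ⊕ ℤ × ℤ` (the `V_j`, the
`η_t` and the `(κ_{j,t}, ε_{j,t})`), whose law `Q` is a product measure, and `Z` is a fixed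
measurable function of it which intertwines `τ₁`, `τ₂` with reindexings of the family. The
marginals are invariant under these reindexings, so they preserve `Q`, and `τ₁`, `τ₂` preserve
`P_Z`. A set invariant under `τ₁` and `τ₂` pulls back to a set invariant under the diagonal
reindexing `(j, t) ↦ (j + 1, t + 1)`, which moves every finite set of indices off itself. Hence
every cylinder set is independent of one of its translates; approximating the invariant set by
cylinders shows that it is independent of itself, so its measure is `0` or `1`.
-/

open MeasureTheory ProbabilityTheory
open scoped symmDiff

section Mixing

variable {α : Type*} [MeasurableSpace α] {μ : Measure α} [IsProbabilityMeasure μ] {T : α → α}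

lemma abs_measureReal_sub_mul_self_le (hT : MeasurePreserving T μ μ) {B C : Set α}
    (hB : MeasurableSet B) (hTB : T ⁻¹' B = B) (hC : MeasurableSet C)
    (hind : IndepSet C (T ⁻¹' C) μ) :
    |μ.real B - μ.real B * μ.real B| ≤ 4 * μ.real (B ∆ C) := by
  have hTC : MeasurableSet (T ⁻¹' C) := hT.measurable hC
  have hCC : μ.real (C ∩ T ⁻¹' C) = μ.real C * μ.real C := by
    rw [measureReal_def, hind.measure_inter_eq_mul, ENNReal.toReal_mul, ← measureReal_def,
      ← measureReal_def, hT.measureReal_preimage hC.nullMeasurableSet]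
  have hB_CC : |μ.real B - μ.real (C ∩ T ⁻¹' C)| ≤ 2 * μ.real (B ∆ C) := by
    have hsub : B ∆ (C ∩ T ⁻¹' C) ⊆ B ∆ C ∪ T ⁻¹' (B ∆ C) := by
      rw [Set.preimage_symmDiff, hTB]
      intro x
      simp only [Set.mem_symmDiff, Set.mem_union, Set.mem_inter_iff]
      tauto
    calc |μ.real B - μ.real (C ∩ T ⁻¹' C)|
        ≤ μ.real (B ∆ (C ∩ T ⁻¹' C)) :=
          abs_measureReal_sub_le_measureReal_symmDiff hB.nullMeasurableSet
            (hC.inter hTC).nullMeasurableSet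
      _ ≤ μ.real (B ∆ C) + μ.real (T ⁻¹' (B ∆ C)) :=
          (measureReal_mono hsub).trans (measureReal_union_le _ _)
      _ = 2 * μ.real (B ∆ C) := by
          rw [hT.measureReal_preimage (hB.symmDiff hC).nullMeasurableSet]; ring
  have hB_C : |μ.real B - μ.real C| ≤ μ.real (B ∆ C) :=
    abs_measureReal_sub_le_measureReal_symmDiff hB.nullMeasurableSet hC.nullMeasurableSet
  rw [hCC] at hB_CC
  have hB1 : μ.real B ≤ 1 := measureReal_le_one
  have hC1 : μ.real C ≤ 1 := measureReal_le_one
  have hB0 : 0 ≤ μ.real B := measureReal_nonneg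
  have hC0 : 0 ≤ μ.real C := measureReal_nonneg
  rw [abs_le] at hB_CC hB_C ⊢
  constructor <;> nlinarith

theorem MeasureTheory.MeasurePreserving.preErgodic_of_exists_indepSet_preimage_iterate
    (hT : MeasurePreserving T μ μ) {𝒜 : Set (Set α)} (h𝒜 : IsSetAlgebra 𝒜)
    (hgen : ‹MeasurableSpace α› = MeasurableSpace.generateFrom 𝒜)
    (hmix : ∀ C ∈ 𝒜, ∃ n, IndepSet C (T^[n] ⁻¹' C) μ) : PreErgodic T μ where
  aeconst_set B hB hTB := by
    have hdense := Measure.MeasureDense.of_generateFrom_isSetAlgebra_finite (μ := μ) h𝒜 hgen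
    have hreal : μ.real B = μ.real B * μ.real B := by
      refine eq_of_forall_dist_le fun ε hε => ?_
      obtain ⟨C, hC𝒜, hBC⟩ := hdense.approx B hB (measure_ne_top μ B) (ε / 4) (by positivity)
      obtain ⟨n, hn⟩ := hmix C hC𝒜
      calc dist (μ.real B) (μ.real B * μ.real B)
          ≤ 4 * μ.real (B ∆ C) :=
            abs_measureReal_sub_mul_self_le (hT.iterate n) hB
              (Function.IsFixedPt.preimage_iterate hTB n) (hdense.measurable C hC𝒜) hn
        _ ≤ ε := by
            have : μ.real (B ∆ C) ≤ ε / 4 :=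
              ENNReal.toReal_le_of_le_ofReal (by positivity) hBC.le
            linarith
    have hB01 : μ.real B = 0 ∨ μ.real B = 1 := by
      rcases mul_eq_zero.mp (show μ.real B * (1 - μ.real B) = 0 by linarith) with h | h
      · exact .inl h
      · exact .inr (by linarith)
    refine Filter.eventuallyConst_set'.2 (hB01.imp (fun h => ?_) (fun h => ?_))
    · rw [ae_eq_empty, ← measureReal_eq_zero_iff]; exact h
    · rw [ae_eq_univ, ← measureReal_eq_zero_iff, probReal_compl_eq_one_sub hB, h, sub_self]

end Mixing

lemma iterate_precomp {ι γ : Type*} (e : ι → ι) (n : ℕ) :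
    (fun (x : ι → γ) i => x (e i))^[n] = fun x i => x (e^[n] i) := by
  induction n with
  | zero => rfl
  | succ n ih =>
    funext x i
    rw [Function.iterate_succ_apply, ih, Function.iterate_succ_apply']

section BernoulliShift

variable {ι γ : Type*} [MeasurableSpace γ] {ν : ι → Measure γ} [∀ i, IsProbabilityMeasure (ν i)]

lemma measurePreserving_precomp_infinitePi {e : ι → ι} (he : Function.Injective e)
    (hν : ∀ i, ν (e i) = ν i) :
    MeasurePreserving (fun (x : ι → γ) i => x (e i)) (Measure.infinitePi ν)
      (Measure.infinitePi ν) where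
  measurable := by fun_prop
  map_eq := by simp_rw [Measure.map_infinitePi_infinitePi_of_inj he, hν]

lemma indepSet_cylinder_preimage_precomp [DecidableEq ι] {s : Finset ι} {f : ι → ι}
    (hdisj : Disjoint s (s.image f)) {S : Set (s → γ)} (hS : MeasurableSet S) :
    IndepSet (cylinder s S) ((fun (x : ι → γ) i => x (f i)) ⁻¹' cylinder s S)
      (Measure.infinitePi ν) := by
  have hcoord : iIndepFun (fun i (x : ι → γ) => x i) (Measure.infinitePi ν) :=
    iIndepFun_infinitePi (X := fun _ => id) fun _ => measurable_id
  have hreindex : Measurable fun (y : s.image f → γ) (i : s) =>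
      y ⟨f i, Finset.mem_image_of_mem f i.2⟩ := by fun_prop
  have hblocks := (hcoord.indepFun_finset s (s.image f) hdisj fun i => measurable_pi_apply i).comp
    measurable_id hreindex
  exact (indepFun_iff_indepSet_preimage (by fun_prop) (by fun_prop)).1 hblocks S S hS hS

lemma Finset.exists_disjoint_image_iterate [DecidableEq ι] {e : ι → ι} (φ : ι → ℤ)
    (hφ : ∀ i, φ (e i) = φ i + 1) (s : Finset ι) : ∃ n, Disjoint s (s.image e^[n]) := by
  have hφn : ∀ n i, φ (e^[n] i) = φ i + n := by
    intro n
    induction n with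
    | zero => simp
    | succ n ih => intro i; rw [Function.iterate_succ_apply', hφ, ih]; push_cast; ring
  set M := s.sup fun i => (φ i).natAbs
  refine ⟨2 * M + 1, Finset.disjoint_left.2 fun {i'} hi' hmem => ?_⟩
  obtain ⟨i, hi, rfl⟩ := Finset.mem_image.1 hmem
  have hi_le : (φ i).natAbs ≤ M := Finset.le_sup (f := fun i => (φ i).natAbs) hi
  have hi'_le : (φ (e^[2 * M + 1] i)).natAbs ≤ M :=
    Finset.le_sup (f := fun i => (φ i).natAbs) hi'
  rw [hφn] at hi'_le
  omega

theorem ergodic_precomp_infinitePi {e : ι → ι} (he : Function.Injective e)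
    (hν : ∀ i, ν (e i) = ν i) (φ : ι → ℤ) (hφ : ∀ i, φ (e i) = φ i + 1) :
    Ergodic (fun (x : ι → γ) i => x (e i)) (Measure.infinitePi ν) := by
  classical
  have hT := measurePreserving_precomp_infinitePi he hν
  refine ⟨hT, hT.preErgodic_of_exists_indepSet_preimage_iterate isSetAlgebra_measurableCylinders
    generateFrom_measurableCylinders.symm fun C hC => ?_⟩
  obtain ⟨s, S, hS, rfl⟩ := (mem_measurableCylinders _).1 hC
  obtain ⟨n, hn⟩ := s.exists_disjoint_image_iterate φ hφ
  exact ⟨n, iterate_precomp e n ▸ indepSet_cylinder_preimage_precomp hn hS⟩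

end BernoulliShift

lemma ProbabilityTheory.iIndepFun_sumElim {Ω ι₁ ι₂ γ : Type*} [MeasurableSpace Ω]
    [MeasurableSpace γ] {μ : Measure Ω} {X : Ω → ι₁ → γ} {W : Ω → ι₂ → γ}
    (hX : iIndepFun (fun i ω => X ω i) μ) (hW : iIndepFun (fun i ω => W ω i) μ)
    (hXW : IndepFun X W μ) :
    iIndepFun (fun i ω => Sum.elim (X ω) (W ω) i) μ := by
  classical
  rw [iIndepFun_iff_measure_inter_preimage_eq_mul]
  intro S sets hsets
  set L := ⋂ a ∈ S.toLeft, (fun x : ι₁ → γ => x a) ⁻¹' sets (.inl a)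
  set R := ⋂ b ∈ S.toRight, (fun x : ι₂ → γ => x b) ⁻¹' sets (.inr b)
  have hL : MeasurableSet L := .biInter S.toLeft.countable_toSet fun a ha =>
    measurable_pi_apply a (hsets _ (Finset.mem_toLeft.1 ha))
  have hR : MeasurableSet R := .biInter S.toRight.countable_toSet fun b hb =>
    measurable_pi_apply b (hsets _ (Finset.mem_toRight.1 hb))
  have hsplit : ⋂ i ∈ S, (fun ω => Sum.elim (X ω) (W ω) i) ⁻¹' sets i = X ⁻¹' L ∩ W ⁻¹' R := by
    ext ω
    simp only [L, R, Set.mem_iInter, Set.mem_inter_iff, Set.mem_preimage, Finset.mem_toLeft,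
      Finset.mem_toRight, Sum.forall, Sum.elim_inl, Sum.elim_inr]
  rw [hsplit, hXW.measure_inter_preimage_eq_mul _ _ hL hR,
    Finset.prod_sum_eq_prod_toLeft_mul_prod_toRight]
  simp only [L, R, Set.preimage_iInter₂]
  exact congr_arg₂ (· * ·)
    (hX.measure_inter_preimage_eq_mul _ fun a ha => hsets _ (Finset.mem_toLeft.1 ha))
    (hW.measure_inter_preimage_eq_mul _ fun b hb => hsets _ (Finset.mem_toRight.1 hb))

/-- `inl j` indexes `V_j`, `inr (inl t)` indexes `η_t` and `inr (inr (j, t))` indexes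
`(κ_{j,t}, ε_{j,t})`. -/
abbrev NoiseIndex : Type := ℤ ⊕ ℤ ⊕ ℤ × ℤ

namespace NoiseIndex

def shiftJ : NoiseIndex → NoiseIndex := Sum.map (· + 1) (Sum.map id (Prod.map (· + 1) id))

def shiftT : NoiseIndex → NoiseIndex := Sum.map id (Sum.map (· + 1) (Prod.map id (· + 1)))

def height : NoiseIndex → ℤ := Sum.elim id (Sum.elim id Prod.snd)

lemma shiftJ_injective : Function.Injective shiftJ :=
  Sum.map_injective.2 ⟨add_left_injective 1, Sum.map_injective.2
    ⟨Function.injective_id, Prod.map_injective.2 ⟨add_left_injective 1, Function.injective_id⟩⟩⟩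

lemma shiftT_injective : Function.Injective shiftT :=
  Sum.map_injective.2 ⟨Function.injective_id, Sum.map_injective.2
    ⟨add_left_injective 1, Prod.map_injective.2 ⟨Function.injective_id, add_left_injective 1⟩⟩⟩

lemma height_shiftT_shiftJ (i : NoiseIndex) : height (shiftT (shiftJ i)) = height i + 1 := by
  rcases i with j | t | ⟨j, t⟩ <;> rfl

end NoiseIndex

open NoiseIndex

section Readout

variable {A B C E : Type*} (G : A × (ℕ → B × C) → E)

def readout (x : NoiseIndex → A × B × C) (j t : ℤ) : E :=
  G ((x (.inl j)).1,
    fun s : ℕ => ((x (.inr (.inl (t - s)))).2.1, (x (.inr (.inr (j, t - s)))).2.2))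

lemma semiconj_readout_shiftJ :
    Function.Semiconj (readout G) (fun x i => x (shiftJ i)) (fun y j t => y (j + 1) t) :=
  fun _ => rfl

lemma semiconj_readout_shiftT :
    Function.Semiconj (readout G) (fun x i => x (shiftT i)) (fun y j t => y j (t + 1)) := by
  intro x
  funext j t
  simp only [readout, shiftT, Sum.map_inl, Sum.map_inr, Prod.map, id, sub_add_eq_add_sub]

lemma measurable_readout [MeasurableSpace A] [MeasurableSpace B] [MeasurableSpace C]
    [MeasurableSpace E] (hG : Measurable G) : Measurable (readout G) := by
  unfold readout; fun_prop

end Readout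

section Model

variable {Ω A B C : Type*} [MeasurableSpace Ω] [MeasurableSpace A] [MeasurableSpace B]
  [MeasurableSpace C] [Zero A] [Zero B] [Zero C] {μ : Measure Ω}
  {V : ℤ → Ω → A} {η : ℤ → Ω → B} {κε : ℤ → ℤ → Ω → C}

variable (V η κε) in
/-- Each variable is padded with zeros into the common space `A × B × C`, so that the whole noise
is one family with a single codomain. -/
def noise (i : NoiseIndex) (ω : Ω) : A × B × C :=
  Sum.elim (fun j => (V j ω, 0, 0))
    (Sum.elim (fun t => (0, η t ω, 0)) fun p => (0, 0, κε p.1 p.2 ω)) i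

lemma measurable_noise (hV : ∀ j, Measurable (V j)) (hη : ∀ t, Measurable (η t))
    (hκε : ∀ j t, Measurable (κε j t)) (i : NoiseIndex) : Measurable (noise V η κε i) := by
  rcases i with j | t | ⟨j, t⟩ <;> unfold noise <;> dsimp only [Sum.elim_inl, Sum.elim_inr] <;>
    fun_prop

lemma iIndepFun_noise (hV : iIndepFun V μ) (hη : iIndepFun η μ)
    (hκε : iIndepFun (fun p : ℤ × ℤ => κε p.1 p.2) μ)
    (h23 : IndepFun (fun ω t => η t ω) (fun ω (p : ℤ × ℤ) => κε p.1 p.2 ω) μ)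
    (h1_23 : IndepFun (fun ω j => V j ω)
      (fun ω => (fun t => η t ω, fun p : ℤ × ℤ => κε p.1 p.2 ω)) μ) :
    iIndepFun (noise V η κε) μ :=
  iIndepFun_sumElim (hV.comp (fun _ a => ((a, 0, 0) : A × B × C)) fun _ => by fun_prop)
    (iIndepFun_sumElim (hη.comp (fun _ b => ((0, b, 0) : A × B × C)) fun _ => by fun_prop)
      (hκε.comp (fun _ c => ((0, 0, c) : A × B × C)) fun _ => by fun_prop)
      (h23.comp (φ := fun y t => ((0, y t, 0) : A × B × C))
        (ψ := fun y p => ((0, 0, y p) : A × B × C)) (by fun_prop) (by fun_prop)))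
    (h1_23.comp (φ := fun y j => ((y j, 0, 0) : A × B × C))
      (ψ := fun y => Sum.elim (fun t => ((0, y.1 t, 0) : A × B × C)) fun p => (0, 0, y.2 p))
      (by fun_prop) (measurable_pi_lambda _ fun i => by
        rcases i with t | p <;> dsimp only [Sum.elim_inl, Sum.elim_inr] <;> fun_prop))

lemma map_noise_shiftJ (hV : ∀ j, IdentDistrib (V j) (V 0) μ μ)
    (hκε : ∀ j t, IdentDistrib (κε j t) (κε 0 0) μ μ) (i : NoiseIndex) :
    μ.map (noise V η κε (shiftJ i)) = μ.map (noise V η κε i) := by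
  rcases i with j | t | ⟨j, t⟩
  · exact (((hV (j + 1)).trans (hV j).symm).comp
      (u := fun a => ((a, 0, 0) : A × B × C)) (by fun_prop)).map_eq
  · rfl
  · exact (((hκε (j + 1) t).trans (hκε j t).symm).comp
      (u := fun c => ((0, 0, c) : A × B × C)) (by fun_prop)).map_eq

lemma map_noise_shiftT (hη : ∀ t, IdentDistrib (η t) (η 0) μ μ)
    (hκε : ∀ j t, IdentDistrib (κε j t) (κε 0 0) μ μ) (i : NoiseIndex) :
    μ.map (noise V η κε (shiftT i)) = μ.map (noise V η κε i) := by
  rcases i with j | t | ⟨j, t⟩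
  · rfl
  · exact (((hη (t + 1)).trans (hη t).symm).comp
      (u := fun b => ((0, b, 0) : A × B × C)) (by fun_prop)).map_eq
  · exact (((hκε j (t + 1)).trans (hκε j t).symm).comp
      (u := fun c => ((0, 0, c) : A × B × C)) (by fun_prop)).map_eq

end Model

/-- Bernoulli-shift array driven by individual effects `V_j`, common shocks `η_t` and
idiosyncratic shocks `(κ_{j,t}, ε_{j,t})`: the law `P_Z` of
`Z_{j,t} = Ḡ(V_j, ((η_{t−s}, κ_{j,t−s}, ε_{j,t−s}))_{s≥0})` on `ℝ^{ℤ×ℤ}` is invariant under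
both shifts `τ₁, τ₂`, and every set invariant under both shifts has `P_Z`-measure `0` or `1`. -/
theorem stmt17 {Ω : Type*} [MeasurableSpace Ω] (μ : Measure Ω) [IsProbabilityMeasure μ]
    (d₂ d₃ d₄ k : ℕ)
    (V : ℤ → Ω → Fin d₂ → ℝ) (η : ℤ → Ω → Fin d₃ → ℝ)
    (κε : ℤ → ℤ → Ω → (Fin d₄ → ℝ) × (Fin k → ℝ))
    (hVmeas : ∀ j, Measurable (V j)) (hηmeas : ∀ t, Measurable (η t))
    (hκεmeas : ∀ j t, Measurable (κε j t))
    -- `(V_j)_{j∈ℤ}` is i.i.d.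
    (hVindep : iIndepFun V μ)
    (hVident : ∀ j : ℤ, IdentDistrib (V j) (V 0) μ μ)
    -- `(η_t)_{t∈ℤ}` is i.i.d.
    (hηindep : iIndepFun η μ)
    (hηident : ∀ t : ℤ, IdentDistrib (η t) (η 0) μ μ)
    -- `((κ_{j,t}, ε_{j,t}))_{t∈ℤ}` is i.i.d. in `t` and i.i.d. across `j`
    (hκεindep : iIndepFun
      (fun jt : ℤ × ℤ => κε jt.1 jt.2) μ)
    (hκεident : ∀ j t : ℤ, IdentDistrib (κε j t) (κε 0 0) μ μ)
    -- mutual independence of the three families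
    (hindep23 : IndepFun (fun ω (t : ℤ) => η t ω)
      (fun ω (jt : ℤ × ℤ) => κε jt.1 jt.2 ω) μ)
    (hindep1_23 : IndepFun (fun ω (j : ℤ) => V j ω)
      (fun ω => ((fun t : ℤ => η t ω), (fun jt : ℤ × ℤ => κε jt.1 jt.2 ω))) μ)
    (G : (Fin d₂ → ℝ) × (ℕ → (Fin d₃ → ℝ) × (Fin d₄ → ℝ) × (Fin k → ℝ)) → ℝ)
    (hG : Measurable G)
    (Z : ℤ → ℤ → Ω → ℝ)
    (hZ : ∀ j t ω, Z j t ω =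
      G (V j ω, fun s : ℕ => (η (t - s) ω, (κε j (t - s) ω).1, (κε j (t - s) ω).2))) :
    MeasurePreserving (fun (x : ℤ → ℤ → ℝ) (j t : ℤ) => x (j + 1) t)
        (Measure.map (fun ω (j t : ℤ) => Z j t ω) μ)
        (Measure.map (fun ω (j t : ℤ) => Z j t ω) μ) ∧
    MeasurePreserving (fun (x : ℤ → ℤ → ℝ) (j t : ℤ) => x j (t + 1))
        (Measure.map (fun ω (j t : ℤ) => Z j t ω) μ)
        (Measure.map (fun ω (j t : ℤ) => Z j t ω) μ) ∧
    ∀ A : Set (ℤ → ℤ → ℝ), MeasurableSet A →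
      (fun (x : ℤ → ℤ → ℝ) (j t : ℤ) => x (j + 1) t) ⁻¹' A = A →
      (fun (x : ℤ → ℤ → ℝ) (j t : ℤ) => x j (t + 1)) ⁻¹' A = A →
      Measure.map (fun ω (j t : ℤ) => Z j t ω) μ A = 0 ∨
      Measure.map (fun ω (j t : ℤ) => Z j t ω) μ A = 1 := by
  have hnoise := measurable_noise hVmeas hηmeas hκεmeas
  have : ∀ i, IsProbabilityMeasure (μ.map (noise V η κε i)) :=
    fun i => Measure.isProbabilityMeasure_map (hnoise i).aemeasurable
  set Q := Measure.infinitePi fun i => μ.map (noise V η κε i)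
  have hlaw : μ.map (fun ω j t => Z j t ω) = Q.map (readout G) := by
    have hZ' : (fun ω j t => Z j t ω) = readout G ∘ fun ω i => noise V η κε i ω := by
      funext ω j t; exact hZ j t ω
    rw [hZ', ← Measure.map_map (measurable_readout G hG) (by fun_prop),
      (iIndepFun_noise hVindep hηindep hκεindep hindep23 hindep1_23).map_fun_eq_infinitePi_map
        hnoise]
  have hreadout : MeasurePreserving (readout G) Q (Q.map (readout G)) :=
    (measurable_readout G hG).measurePreserving Q
  have hJ : MeasurePreserving (fun x i => x (shiftJ i)) Q Q :=
    measurePreserving_precomp_infinitePi shiftJ_injective (map_noise_shiftJ hVident hκεident)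
  have hT : MeasurePreserving (fun x i => x (shiftT i)) Q Q :=
    measurePreserving_precomp_infinitePi shiftT_injective (map_noise_shiftT hηident hκεident)
  -- Neither shift alone is ergodic: `shiftJ` fixes every `η_t` and `shiftT` every `V_j`.
  have hdiag : PreErgodic (fun (x : NoiseIndex → _) i => x (shiftT (shiftJ i))) Q :=
    (ergodic_precomp_infinitePi (shiftT_injective.comp shiftJ_injective)
      (fun i => (map_noise_shiftT hηident hκεident _).trans (map_noise_shiftJ hVident hκεident i))
      height height_shiftT_shiftJ).toPreErgodic
  have : IsProbabilityMeasure (Q.map (readout G)) :=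
    Measure.isProbabilityMeasure_map (measurable_readout G hG).aemeasurable
  rw [hlaw]
  refine ⟨hreadout.of_semiconj hJ (semiconj_readout_shiftJ G) (by fun_prop),
    hreadout.of_semiconj hT (semiconj_readout_shiftT G) (by fun_prop), fun A hA hA₁ hA₂ => ?_⟩
  refine (hreadout.preErgodic_of_preErgodic_semiconj hdiag
    ((semiconj_readout_shiftJ G).comp_right (semiconj_readout_shiftT G))).prob_eq_zero_or_one hA ?_
  rw [Set.preimage_comp, hA₁, hA₂]
end
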